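/- Let φ be a Schwartz function on ℝ^{2d} (variables (r, p)), ε a smooth compactly supported vector field on ℝ^d, and define D(ε)φ = ε(r)^T ∇_r φ − ((∇ε(r)) p)^T ∇_p φ. Then D(ε)φ is again a Schwartz function, and for every Schwartz ψ one has ∫_{ℝ^{2d}} ψ · D(ε)φ dr dp = −∫_{ℝ^{2d}} (D(ε)ψ) · φ dr dp. -/

import Mathlib

open MeasureTheory SchwartzMap
open scoped ContDiff
set_option maxHeartbeats 1000000

open MeasureTheory
open scoped ContDiff

section Toolkit

variable {E F G : Type*} [NormedAddCommGroup E] [NormedSpace ℝ E]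
  [NormedAddCommGroup F] [NormedSpace ℝ F] [NormedAddCommGroup G] [NormedSpace ℝ G]

lemma my_htg_comp_clm {f : F → G} (hf : Function.HasTemperateGrowth f) (L : E →L[ℝ] F) :
    Function.HasTemperateGrowth (fun x => f (L x)) := by
  refine ⟨hf.1.comp L.contDiff, fun n => ?_⟩
  obtain ⟨k, C, hC, h⟩ := hf.norm_iteratedFDeriv_le_uniform n
  refine ⟨k, C * ‖L‖ ^ n * (1 + ‖L‖) ^ k, fun x => ?_⟩
  have heq := L.iteratedFDeriv_comp_right (f := f) hf.1 x (i := n) (by exact_mod_cast le_top)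
  have h1 : ‖iteratedFDeriv ℝ n (f ∘ L) x‖ ≤ ‖iteratedFDeriv ℝ n f (L x)‖ * ‖L‖ ^ n := by
    rw [heq]
    simpa using (iteratedFDeriv ℝ n f (L x)).norm_compContinuousLinearMap_le fun _ => L
  have h2 : ‖iteratedFDeriv ℝ n f (L x)‖ ≤ C * (1 + ‖L x‖) ^ k := h n le_rfl (L x)
  have h3 : (1 + ‖L x‖) ≤ (1 + ‖L‖) * (1 + ‖x‖) := by
    have := L.le_opNorm x
    have h4 : (0:ℝ) ≤ ‖L‖ := norm_nonneg _
    have h5 : (0:ℝ) ≤ ‖x‖ := norm_nonneg _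
    nlinarith
  calc ‖iteratedFDeriv ℝ n (fun x => f (L x)) x‖
      = ‖iteratedFDeriv ℝ n (f ∘ L) x‖ := rfl
    _ ≤ ‖iteratedFDeriv ℝ n f (L x)‖ * ‖L‖ ^ n := h1
    _ ≤ (C * (1 + ‖L x‖) ^ k) * ‖L‖ ^ n := by
        apply mul_le_mul_of_nonneg_right h2 (by positivity)
    _ ≤ (C * ((1 + ‖L‖) * (1 + ‖x‖)) ^ k) * ‖L‖ ^ n := by
        have h6 : (0:ℝ) ≤ 1 + ‖L x‖ := by positivity
        gcongr
    _ = C * ‖L‖ ^ n * (1 + ‖L‖) ^ k * (1 + ‖x‖) ^ k := by rw [mul_pow]; ring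

lemma my_htg_clm_apply {f : E → F →L[ℝ] G} {g : E → F}
    (hf : Function.HasTemperateGrowth f) (hg : Function.HasTemperateGrowth g) :
    Function.HasTemperateGrowth (fun x => f x (g x)) := by
  refine ⟨hf.1.clm_apply hg.1, fun n => ?_⟩
  obtain ⟨k1, C1, hC1, h1⟩ := hf.norm_iteratedFDeriv_le_uniform n
  obtain ⟨k2, C2, hC2, h2⟩ := hg.norm_iteratedFDeriv_le_uniform n
  refine ⟨k1 + k2, 2 ^ n * (C1 * C2), fun x => ?_⟩
  calc ‖iteratedFDeriv ℝ n (fun x => f x (g x)) x‖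
      ≤ ∑ i ∈ Finset.range (n + 1),
          (n.choose i : ℝ) * ‖iteratedFDeriv ℝ i f x‖ * ‖iteratedFDeriv ℝ (n - i) g x‖ :=
        norm_iteratedFDeriv_clm_apply hf.1 hg.1 x (by exact_mod_cast le_top)
    _ ≤ ∑ i ∈ Finset.range (n + 1),
          (n.choose i : ℝ) * (C1 * C2 * (1 + ‖x‖) ^ (k1 + k2)) := by
        apply Finset.sum_le_sum
        intro i hi
        rw [Finset.mem_range] at hi
        have e1 := h1 i (by omega) x
        have e2 := h2 (n - i) (by omega) x
        calc (n.choose i : ℝ) * ‖iteratedFDeriv ℝ i f x‖ * ‖iteratedFDeriv ℝ (n - i) g x‖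
            ≤ (n.choose i : ℝ) * (C1 * (1 + ‖x‖) ^ k1) * (C2 * (1 + ‖x‖) ^ k2) := by
              apply mul_le_mul
              · exact mul_le_mul_of_nonneg_left e1 (by positivity)
              · exact e2
              · exact norm_nonneg _
              · positivity
          _ = (n.choose i : ℝ) * (C1 * C2 * (1 + ‖x‖) ^ (k1 + k2)) := by ring
    _ = (∑ i ∈ Finset.range (n + 1), (n.choose i : ℝ)) * (C1 * C2 * (1 + ‖x‖) ^ (k1 + k2)) := by
        rw [Finset.sum_mul]
    _ = 2 ^ n * (C1 * C2) * (1 + ‖x‖) ^ (k1 + k2) := by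
        have : (∑ i ∈ Finset.range (n + 1), (n.choose i : ℝ)) = 2 ^ n := by
          rw [← Nat.cast_sum, Nat.sum_range_choose]
          norm_num
        rw [this]; ring

lemma my_htg_clm_comp {f : E → F} (hf : Function.HasTemperateGrowth f) (L : F →L[ℝ] G) :
    Function.HasTemperateGrowth (fun x => L (f x)) :=
  my_htg_clm_apply (Function.HasTemperateGrowth.const L) hf

lemma my_htg_add {f g : E → F} (hf : Function.HasTemperateGrowth f)
    (hg : Function.HasTemperateGrowth g) :
    Function.HasTemperateGrowth (fun x => f x + g x) := by
  refine ⟨hf.1.add hg.1, fun n => ?_⟩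
  obtain ⟨k1, C1, hC1, h1⟩ := hf.norm_iteratedFDeriv_le_uniform n
  obtain ⟨k2, C2, hC2, h2⟩ := hg.norm_iteratedFDeriv_le_uniform n
  refine ⟨k1 + k2, C1 + C2, fun x => ?_⟩
  have heq : iteratedFDeriv ℝ n (fun x => f x + g x) x
      = iteratedFDeriv ℝ n f x + iteratedFDeriv ℝ n g x :=
    iteratedFDeriv_add_apply (hf.1.contDiffAt.of_le (by exact_mod_cast le_top)) (hg.1.contDiffAt.of_le (by exact_mod_cast le_top))
  have hx : (1:ℝ) ≤ 1 + ‖x‖ := by linarith [norm_nonneg x]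
  calc ‖iteratedFDeriv ℝ n (fun x => f x + g x) x‖
      ≤ ‖iteratedFDeriv ℝ n f x‖ + ‖iteratedFDeriv ℝ n g x‖ := by
        rw [heq]; exact norm_add_le _ _
    _ ≤ C1 * (1 + ‖x‖) ^ k1 + C2 * (1 + ‖x‖) ^ k2 := add_le_add (h1 n le_rfl x) (h2 n le_rfl x)
    _ ≤ C1 * (1 + ‖x‖) ^ (k1 + k2) + C2 * (1 + ‖x‖) ^ (k1 + k2) := by
        gcongr <;> omega
    _ = (C1 + C2) * (1 + ‖x‖) ^ (k1 + k2) := by ring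

lemma my_htg_prod {f : E → F} {g : E → G} (hf : Function.HasTemperateGrowth f)
    (hg : Function.HasTemperateGrowth g) :
    Function.HasTemperateGrowth (fun x => (f x, g x)) := by
  have h1 := my_htg_clm_comp hf (ContinuousLinearMap.inl ℝ F G)
  have h2 := my_htg_clm_comp hg (ContinuousLinearMap.inr ℝ F G)
  have key : (fun x => (f x, g x)) = fun x =>
      (ContinuousLinearMap.inl ℝ F G) (f x) + (ContinuousLinearMap.inr ℝ F G) (g x) := by
    funext x
    simp
  rw [key]
  exact my_htg_add h1 h2

lemma my_htg_of_compactSupport {f : E → F} (hf : ContDiff ℝ ∞ f) (h : HasCompactSupport f) :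
    Function.HasTemperateGrowth f := by
  refine ⟨hf, fun n => ?_⟩
  have h1 : Continuous (iteratedFDeriv ℝ n f) := hf.continuous_iteratedFDeriv (by exact_mod_cast le_top)
  have h2 : HasCompactSupport (iteratedFDeriv ℝ n f) := h.iteratedFDeriv n
  obtain ⟨C, hC⟩ := h1.bounded_above_of_compact_support h2
  refine ⟨0, C, fun x => by simpa using hC x⟩

end Toolkit


lemma my_schwartz_htg {E F : Type*} [NormedAddCommGroup E] [NormedSpace ℝ E]
    [NormedAddCommGroup F] [NormedSpace ℝ F] (f : SchwartzMap E F) :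
    Function.HasTemperateGrowth ⇑f :=
  ⟨f.smooth', fun n => ⟨0, SchwartzMap.seminorm ℝ 0 n f, fun x => by
    simpa using f.norm_iteratedFDeriv_le_seminorm ℝ n x⟩⟩

theorem my_ibp_sum {E : Type*} [NormedAddCommGroup E] [NormedSpace ℝ E] [MeasurableSpace E]
    [BorelSpace E] [FiniteDimensional ℝ E] [SecondCountableTopology E]
    {μ : Measure E} [μ.IsAddHaarMeasure] [μ.HasTemperateGrowth]
    {ι : Type*} [Fintype ι] (v : ι → E) (c c' : ι → E → ℝ)
    (hc : ∀ i, (c i).HasTemperateGrowth) (hc' : ∀ i, (c' i).HasTemperateGrowth)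
    (hder : ∀ i q, fderiv ℝ (c i) q (v i) = c' i q)
    (hsum : ∀ q, (∑ i, c' i q) = 0)
    (φ ψ : SchwartzMap E ℝ) :
    ∫ q, ψ q * (∑ i, c i q * fderiv ℝ (⇑φ) q (v i)) ∂μ
      = -∫ q, (∑ i, c i q * fderiv ℝ (⇑ψ) q (v i)) * φ q ∂μ := by
  have mul := ContinuousLinearMap.mul ℝ ℝ
  -- integrability helpers
  have hI2 : ∀ (f g : SchwartzMap E ℝ) (i : ι),
      Integrable (fun x => (g x * c i x) * fderiv ℝ (⇑f) x (v i)) μ := fun f g i =>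
    (bilinLeftCLM (ContinuousLinearMap.mul ℝ ℝ)
      (my_schwartz_htg (SchwartzMap.evalCLM (𝕜 := ℝ) E ℝ (v i) (fderivCLM ℝ E ℝ f)))
      (bilinLeftCLM (ContinuousLinearMap.mul ℝ ℝ) (hc i) g)).integrable
  have hI1 : ∀ (f g : SchwartzMap E ℝ) (i : ι),
      Integrable (fun x => (fderiv ℝ (⇑g) x (v i) * c i x + g x * c' i x) * f x) μ := fun f g i =>
    (bilinLeftCLM (ContinuousLinearMap.mul ℝ ℝ) (my_schwartz_htg f)
      (bilinLeftCLM (ContinuousLinearMap.mul ℝ ℝ) (hc i)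
          (SchwartzMap.evalCLM (𝕜 := ℝ) E ℝ (v i) (fderivCLM ℝ E ℝ g))
        + bilinLeftCLM (ContinuousLinearMap.mul ℝ ℝ) (hc' i) g)).integrable
  have hI3 : ∀ (f g : SchwartzMap E ℝ) (i : ι),
      Integrable (fun x => (g x * c i x) * f x) μ := fun f g i =>
    (bilinLeftCLM (ContinuousLinearMap.mul ℝ ℝ) (my_schwartz_htg f)
      (bilinLeftCLM (ContinuousLinearMap.mul ℝ ℝ) (hc i) g)).integrable
  have hcd : ∀ i, Differentiable ℝ (c i) := fun i => (hc i).1.differentiable (by simp)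
  have hmulderiv : ∀ (g : SchwartzMap E ℝ) (i : ι) (x : E),
      fderiv ℝ (fun q => g q * c i q) x (v i)
        = fderiv ℝ (⇑g) x (v i) * c i x + g x * c' i x := by
    intro g i x
    rw [fderiv_fun_mul (g.differentiable x) ((hcd i) x)]
    simp only [ContinuousLinearMap.add_apply, ContinuousLinearMap.smul_apply, smul_eq_mul]
    rw [hder i x]
    ring
  have step : ∀ i, ∫ q, (ψ q * c i q) * fderiv ℝ (⇑φ) q (v i) ∂μ
      = -∫ q, (fderiv ℝ (⇑ψ) q (v i) * c i q + ψ q * c' i q) * φ q ∂μ := by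
    intro i
    have hfd : Differentiable ℝ (fun q => ψ q * c i q) := ψ.differentiable.mul (hcd i)
    have I1 : Integrable (fun x => fderiv ℝ (fun q => ψ q * c i q) x (v i) * φ x) μ :=
      (hI1 φ ψ i).congr (Filter.Eventually.of_forall fun x => by dsimp only; rw [hmulderiv ψ i x])
    have key := integral_mul_fderiv_eq_neg_fderiv_mul_of_integrable I1 (hI2 φ ψ i) (hI3 φ ψ i)
      (fun x _ => hfd x) (fun x _ => φ.differentiable x)
    rw [key]
    congr 1
    exact integral_congr_ae (Filter.Eventually.of_forall fun x => by dsimp only; rw [hmulderiv ψ i x])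
  calc ∫ q, ψ q * (∑ i, c i q * fderiv ℝ (⇑φ) q (v i)) ∂μ
      = ∫ q, ∑ i, (ψ q * c i q) * fderiv ℝ (⇑φ) q (v i) ∂μ := by
        apply integral_congr_ae
        apply Filter.Eventually.of_forall
        intro q
        dsimp only
        rw [Finset.mul_sum]
        exact Finset.sum_congr rfl fun i _ => by ring
    _ = ∑ i, ∫ q, (ψ q * c i q) * fderiv ℝ (⇑φ) q (v i) ∂μ :=
        integral_finset_sum _ fun i _ => hI2 φ ψ i
    _ = ∑ i, -∫ q, (fderiv ℝ (⇑ψ) q (v i) * c i q + ψ q * c' i q) * φ q ∂μ :=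
        Finset.sum_congr rfl fun i _ => step i
    _ = -∑ i, ∫ q, (fderiv ℝ (⇑ψ) q (v i) * c i q + ψ q * c' i q) * φ q ∂μ := by
        rw [Finset.sum_neg_distrib]
    _ = -∫ q, ∑ i, (fderiv ℝ (⇑ψ) q (v i) * c i q + ψ q * c' i q) * φ q ∂μ := by
        rw [integral_finset_sum _ fun i _ => hI1 φ ψ i]
    _ = -∫ q, (∑ i, c i q * fderiv ℝ (⇑ψ) q (v i)) * φ q ∂μ := by
        congr 1
        apply integral_congr_ae
        apply Filter.Eventually.of_forall
        intro q
        dsimp only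
        have : ∑ i, (fderiv ℝ (⇑ψ) q (v i) * c i q + ψ q * c' i q) * φ q
            = (∑ i, c i q * fderiv ℝ (⇑ψ) q (v i)) * φ q
              + (∑ i, c' i q) * (ψ q * φ q) := by
          rw [Finset.sum_mul, Finset.sum_mul]
          rw [← Finset.sum_add_distrib]
          exact Finset.sum_congr rfl fun i _ => by ring
        rw [this, hsum q]
        ring


section Skew

variable {d : ℕ}

noncomputable instance myHaarProd :
    (volume : Measure (EuclideanSpace ℝ (Fin d) × EuclideanSpace ℝ (Fin d))).IsAddHaarMeasure :=
  Measure.prod.instIsAddHaarMeasure volume volume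

theorem my_skew (ε : EuclideanSpace ℝ (Fin d) → EuclideanSpace ℝ (Fin d))
    (hε' : ContDiff ℝ ∞ ε) (hεc : HasCompactSupport ε)
    (φ ψ : SchwartzMap (EuclideanSpace ℝ (Fin d) × EuclideanSpace ℝ (Fin d)) ℝ) :
    ∫ q : EuclideanSpace ℝ (Fin d) × EuclideanSpace ℝ (Fin d),
        ψ q * fderiv ℝ (⇑φ) q (ε q.1, -(fderiv ℝ ε q.1 q.2))
      = -∫ q : EuclideanSpace ℝ (Fin d) × EuclideanSpace ℝ (Fin d),
          fderiv ℝ (⇑ψ) q (ε q.1, -(fderiv ℝ ε q.1 q.2)) * φ q := by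
  classical
  have hde : ContDiff ℝ ∞ (fderiv ℝ ε) := hε'.fderiv_right (by simp)
  have hεdiff : Differentiable ℝ ε := hε'.differentiable (by simp)
  have hdediff : Differentiable ℝ (fderiv ℝ ε) := hde.differentiable (by simp)
  have hεt := my_htg_of_compactSupport hε' hεc
  have hdet := my_htg_of_compactSupport hde (hεc.fderiv (𝕜 := ℝ))
  have hεfst : Function.HasTemperateGrowth
      (fun q : EuclideanSpace ℝ (Fin d) × EuclideanSpace ℝ (Fin d) => ε q.1) :=
    my_htg_comp_clm hεt (ContinuousLinearMap.fst ℝ (EuclideanSpace ℝ (Fin d)) (EuclideanSpace ℝ (Fin d)))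
  have hdfst : Function.HasTemperateGrowth
      (fun q : EuclideanSpace ℝ (Fin d) × EuclideanSpace ℝ (Fin d) => fderiv ℝ ε q.1) :=
    my_htg_comp_clm hdet (ContinuousLinearMap.fst ℝ (EuclideanSpace ℝ (Fin d)) (EuclideanSpace ℝ (Fin d)))
  have hsnd : Function.HasTemperateGrowth
      (fun q : EuclideanSpace ℝ (Fin d) × EuclideanSpace ℝ (Fin d) => q.2) :=
    (ContinuousLinearMap.snd ℝ (EuclideanSpace ℝ (Fin d)) (EuclideanSpace ℝ (Fin d))).hasTemperateGrowth
  have hfd2 : Function.HasTemperateGrowth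
      (fun q : EuclideanSpace ℝ (Fin d) × EuclideanSpace ℝ (Fin d) => fderiv ℝ ε q.1 q.2) :=
    my_htg_clm_apply hdfst hsnd
  -- the coefficient families
  have hC : ∀ i : Fin d ⊕ Fin d, Function.HasTemperateGrowth
      ((Sum.elim (fun i (q : EuclideanSpace ℝ (Fin d) × EuclideanSpace ℝ (Fin d)) => ε q.1 i)
        (fun i q => -(fderiv ℝ ε q.1 q.2 i))) i) := by
    rintro (i | i)
    · exact my_htg_clm_comp hεfst (EuclideanSpace.proj i)
    · exact my_htg_clm_comp hfd2 (-(EuclideanSpace.proj i))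
  have hC' : ∀ i : Fin d ⊕ Fin d, Function.HasTemperateGrowth
      ((Sum.elim
        (fun i (q : EuclideanSpace ℝ (Fin d) × EuclideanSpace ℝ (Fin d)) =>
          fderiv ℝ ε q.1 (EuclideanSpace.single i 1) i)
        (fun i q => -(fderiv ℝ ε q.1 (EuclideanSpace.single i 1) i))) i) := by
    rintro (i | i)
    · exact my_htg_clm_comp hdfst
        ((EuclideanSpace.proj i).comp (ContinuousLinearMap.apply ℝ _ (EuclideanSpace.single i 1)))
    · exact my_htg_clm_comp hdfst
        (-((EuclideanSpace.proj i).comp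
          (ContinuousLinearMap.apply ℝ _ (EuclideanSpace.single i 1))))
  have hder : ∀ (i : Fin d ⊕ Fin d) (q : EuclideanSpace ℝ (Fin d) × EuclideanSpace ℝ (Fin d)),
      fderiv ℝ ((Sum.elim (fun i (q : EuclideanSpace ℝ (Fin d) × EuclideanSpace ℝ (Fin d)) => ε q.1 i)
        (fun i q => -(fderiv ℝ ε q.1 q.2 i))) i) q
        ((Sum.elim (fun i => ((EuclideanSpace.single i 1 : EuclideanSpace ℝ (Fin d)),
            (0 : EuclideanSpace ℝ (Fin d))))
          (fun i => ((0 : EuclideanSpace ℝ (Fin d)),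
            (EuclideanSpace.single i 1 : EuclideanSpace ℝ (Fin d))))) i)
      = (Sum.elim
          (fun i (q : EuclideanSpace ℝ (Fin d) × EuclideanSpace ℝ (Fin d)) =>
            fderiv ℝ ε q.1 (EuclideanSpace.single i 1) i)
          (fun i q => -(fderiv ℝ ε q.1 (EuclideanSpace.single i 1) i))) i q := by
    rintro (i | i) q
    · simp only [Sum.elim_inl]
      have h1 : HasFDerivAt (fun q : EuclideanSpace ℝ (Fin d) × EuclideanSpace ℝ (Fin d) => ε q.1)
          ((fderiv ℝ ε q.1).comp (ContinuousLinearMap.fst ℝ _ _)) q :=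
        ((hεdiff q.1).hasFDerivAt).comp q hasFDerivAt_fst
      have hproj : HasFDerivAt (fun y : EuclideanSpace ℝ (Fin d) => y i)
          (EuclideanSpace.proj i : EuclideanSpace ℝ (Fin d) →L[ℝ] ℝ) (ε q.1) :=
        (EuclideanSpace.proj i : EuclideanSpace ℝ (Fin d) →L[ℝ] ℝ).hasFDerivAt
      have h2 := hproj.comp q h1
      rw [show fderiv ℝ
          (fun q : EuclideanSpace ℝ (Fin d) × EuclideanSpace ℝ (Fin d) => ε q.1 i) q
          = _ from h2.fderiv]
      rfl
    · simp only [Sum.elim_inr]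
      have hc1 : HasFDerivAt
          (fun q : EuclideanSpace ℝ (Fin d) × EuclideanSpace ℝ (Fin d) => fderiv ℝ ε q.1)
          ((fderiv ℝ (fderiv ℝ ε) q.1).comp (ContinuousLinearMap.fst ℝ _ _)) q :=
        ((hdediff q.1).hasFDerivAt).comp q hasFDerivAt_fst
      have hc2 : HasFDerivAt
          (fun q : EuclideanSpace ℝ (Fin d) × EuclideanSpace ℝ (Fin d) => q.2)
          (ContinuousLinearMap.snd ℝ _ _) q := hasFDerivAt_snd
      have hA := hc1.clm_apply hc2
      have hB := ((-(EuclideanSpace.proj i)).hasFDerivAt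
        (x := fderiv ℝ ε q.1 q.2)).comp q hA
      rw [show fderiv ℝ
          (fun q : EuclideanSpace ℝ (Fin d) × EuclideanSpace ℝ (Fin d) =>
            -(fderiv ℝ ε q.1 q.2 i)) q = _ from hB.fderiv]
      simp

  have hbasis : ∀ x : EuclideanSpace ℝ (Fin d),
      ∑ i, x i • EuclideanSpace.single i (1:ℝ) = x := by
    intro x
    have := (EuclideanSpace.basisFun (Fin d) ℝ).sum_repr x
    simpa [EuclideanSpace.basisFun_apply, EuclideanSpace.basisFun_repr] using this
  have hdecomp : ∀ (f : SchwartzMap (EuclideanSpace ℝ (Fin d) × EuclideanSpace ℝ (Fin d)) ℝ)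
      (q : EuclideanSpace ℝ (Fin d) × EuclideanSpace ℝ (Fin d)),
      fderiv ℝ (⇑f) q (ε q.1, -(fderiv ℝ ε q.1 q.2))
        = ∑ i : Fin d ⊕ Fin d,
            (Sum.elim (fun i (q : EuclideanSpace ℝ (Fin d) × EuclideanSpace ℝ (Fin d)) => ε q.1 i)
              (fun i q => -(fderiv ℝ ε q.1 q.2 i))) i q
            * fderiv ℝ (⇑f) q
              ((Sum.elim (fun i => ((EuclideanSpace.single i 1 : EuclideanSpace ℝ (Fin d)),
                  (0 : EuclideanSpace ℝ (Fin d))))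
                (fun i => ((0 : EuclideanSpace ℝ (Fin d)),
                  (EuclideanSpace.single i 1 : EuclideanSpace ℝ (Fin d))))) i) := by
    intro f q
    have e1 : (∑ i, ε q.1 i • ((EuclideanSpace.single i 1, 0) :
        EuclideanSpace ℝ (Fin d) × EuclideanSpace ℝ (Fin d)))
        = ((ε q.1, 0) : EuclideanSpace ℝ (Fin d) × EuclideanSpace ℝ (Fin d)) := by
      apply Prod.ext
      · rw [Prod.fst_sum]
        simpa using hbasis (ε q.1)
      · rw [Prod.snd_sum]
        simp
    have e2 : (∑ i, (-(fderiv ℝ ε q.1 q.2 i)) • ((0, EuclideanSpace.single i 1) :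
        EuclideanSpace ℝ (Fin d) × EuclideanSpace ℝ (Fin d)))
        = ((0, -(fderiv ℝ ε q.1 q.2)) :
            EuclideanSpace ℝ (Fin d) × EuclideanSpace ℝ (Fin d)) := by
      apply Prod.ext
      · rw [Prod.fst_sum]
        simp
      · rw [Prod.snd_sum]
        have h2 : ∀ i : Fin d, ((-(fderiv ℝ ε q.1 q.2 i)) • ((0, EuclideanSpace.single i 1) :
            EuclideanSpace ℝ (Fin d) × EuclideanSpace ℝ (Fin d))).2
            = -((fderiv ℝ ε q.1 q.2 i) •
                (EuclideanSpace.single i 1 : EuclideanSpace ℝ (Fin d))) := by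
          intro i
          simp [neg_smul]
        rw [Finset.sum_congr rfl (fun i _ => h2 i), Finset.sum_neg_distrib]
        exact congrArg Neg.neg (hbasis _)
    have hsplit : ((ε q.1, -(fderiv ℝ ε q.1 q.2)) :
        EuclideanSpace ℝ (Fin d) × EuclideanSpace ℝ (Fin d))
        = (∑ i, ε q.1 i • ((EuclideanSpace.single i 1, 0) :
            EuclideanSpace ℝ (Fin d) × EuclideanSpace ℝ (Fin d)))
          + ∑ i, (-(fderiv ℝ ε q.1 q.2 i)) • ((0, EuclideanSpace.single i 1) :
            EuclideanSpace ℝ (Fin d) × EuclideanSpace ℝ (Fin d)) := by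
      rw [e1, e2]
      simp
    conv_lhs => rw [hsplit]
    rw [map_add, map_sum, map_sum, Fintype.sum_sum_type]
    congr 1
    · exact Finset.sum_congr rfl fun i _ => by
        rw [(fderiv ℝ (⇑f) q).map_smul]; simp [smul_eq_mul]
    · exact Finset.sum_congr rfl fun i _ => by
        rw [(fderiv ℝ (⇑f) q).map_smul]; simp [smul_eq_mul]
  have hsum0 : ∀ q : EuclideanSpace ℝ (Fin d) × EuclideanSpace ℝ (Fin d),
      (∑ i : Fin d ⊕ Fin d, (Sum.elim
        (fun i (q : EuclideanSpace ℝ (Fin d) × EuclideanSpace ℝ (Fin d)) =>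
          fderiv ℝ ε q.1 (EuclideanSpace.single i 1) i)
        (fun i q => -(fderiv ℝ ε q.1 (EuclideanSpace.single i 1) i))) i q) = 0 := by
    intro q
    rw [Fintype.sum_sum_type]
    simp
  have main := my_ibp_sum
    (μ := (volume : Measure (EuclideanSpace ℝ (Fin d) × EuclideanSpace ℝ (Fin d))))
    (Sum.elim (fun i => ((EuclideanSpace.single i 1 : EuclideanSpace ℝ (Fin d)),
        (0 : EuclideanSpace ℝ (Fin d))))
      (fun i => ((0 : EuclideanSpace ℝ (Fin d)),
        (EuclideanSpace.single i 1 : EuclideanSpace ℝ (Fin d)))))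
    (Sum.elim (fun i (q : EuclideanSpace ℝ (Fin d) × EuclideanSpace ℝ (Fin d)) => ε q.1 i)
      (fun i q => -(fderiv ℝ ε q.1 q.2 i)))
    (Sum.elim
      (fun i (q : EuclideanSpace ℝ (Fin d) × EuclideanSpace ℝ (Fin d)) =>
        fderiv ℝ ε q.1 (EuclideanSpace.single i 1) i)
      (fun i q => -(fderiv ℝ ε q.1 (EuclideanSpace.single i 1) i)))
    hC hC' hder hsum0 φ ψ
  calc ∫ q : EuclideanSpace ℝ (Fin d) × EuclideanSpace ℝ (Fin d),
        ψ q * fderiv ℝ (⇑φ) q (ε q.1, -(fderiv ℝ ε q.1 q.2))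
      = ∫ q : EuclideanSpace ℝ (Fin d) × EuclideanSpace ℝ (Fin d),
          ψ q * (∑ i : Fin d ⊕ Fin d, (Sum.elim
            (fun i (q : EuclideanSpace ℝ (Fin d) × EuclideanSpace ℝ (Fin d)) => ε q.1 i)
            (fun i q => -(fderiv ℝ ε q.1 q.2 i))) i q
            * fderiv ℝ (⇑φ) q ((Sum.elim
              (fun i => ((EuclideanSpace.single i 1 : EuclideanSpace ℝ (Fin d)),
                (0 : EuclideanSpace ℝ (Fin d))))
              (fun i => ((0 : EuclideanSpace ℝ (Fin d)),
                (EuclideanSpace.single i 1 : EuclideanSpace ℝ (Fin d))))) i)) := by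
        apply integral_congr_ae
        apply Filter.Eventually.of_forall
        intro q
        dsimp only
        rw [hdecomp φ q]
    _ = -∫ q : EuclideanSpace ℝ (Fin d) × EuclideanSpace ℝ (Fin d),
          (∑ i : Fin d ⊕ Fin d, (Sum.elim
            (fun i (q : EuclideanSpace ℝ (Fin d) × EuclideanSpace ℝ (Fin d)) => ε q.1 i)
            (fun i q => -(fderiv ℝ ε q.1 q.2 i))) i q
            * fderiv ℝ (⇑ψ) q ((Sum.elim
              (fun i => ((EuclideanSpace.single i 1 : EuclideanSpace ℝ (Fin d)),
                (0 : EuclideanSpace ℝ (Fin d))))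
              (fun i => ((0 : EuclideanSpace ℝ (Fin d)),
                (EuclideanSpace.single i 1 : EuclideanSpace ℝ (Fin d))))) i)) * φ q := main
    _ = -∫ q : EuclideanSpace ℝ (Fin d) × EuclideanSpace ℝ (Fin d),
          fderiv ℝ (⇑ψ) q (ε q.1, -(fderiv ℝ ε q.1 q.2)) * φ q := by
        congr 1
        apply integral_congr_ae
        apply Filter.Eventually.of_forall
        intro q
        dsimp only
        rw [hdecomp ψ q]

end Skew


open SchwartzMap in
/-- The infinitesimal phase-shifting operator
`D(ε)φ (r,p) = ε(r)ᵀ ∇_r φ − ((∇ε(r)) p)ᵀ ∇_p φ = Dφ(r,p)[(ε r, −(∇ε r) p)]`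
maps Schwartz functions to Schwartz functions and is formally skew-adjoint:
`∫ ψ · D(ε)φ = −∫ (D(ε)ψ) · φ`. -/
theorem shifting_operator_schwartz_and_skew {d : ℕ}
    (ε : EuclideanSpace ℝ (Fin d) → EuclideanSpace ℝ (Fin d))
    (hε : ContDiff ℝ (⊤ : ℕ∞) ε) (hεc : HasCompactSupport ε)
    (φ ψ : SchwartzMap (EuclideanSpace ℝ (Fin d) × EuclideanSpace ℝ (Fin d)) ℝ) :
    ∃ Dφ Dψ : SchwartzMap (EuclideanSpace ℝ (Fin d) × EuclideanSpace ℝ (Fin d)) ℝ,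
      (⇑Dφ = fun q => fderiv ℝ (⇑φ) q (ε q.1, -(fderiv ℝ ε q.1 q.2))) ∧
      (⇑Dψ = fun q => fderiv ℝ (⇑ψ) q (ε q.1, -(fderiv ℝ ε q.1 q.2))) ∧
      ∫ q : EuclideanSpace ℝ (Fin d) × EuclideanSpace ℝ (Fin d), ψ q * Dφ q
        = -∫ q : EuclideanSpace ℝ (Fin d) × EuclideanSpace ℝ (Fin d), Dψ q * φ q := by
  have hε' : ContDiff ℝ ∞ ε := hε.of_le (by simp)
  have hde : ContDiff ℝ ∞ (fderiv ℝ ε) := hε'.fderiv_right (by simp)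
  have hεdiff : Differentiable ℝ ε := hε'.differentiable (by simp)
  have hdediff : Differentiable ℝ (fderiv ℝ ε) := hde.differentiable (by simp)
  have hεt := my_htg_of_compactSupport hε' hεc
  have hdet := my_htg_of_compactSupport hde (hεc.fderiv (𝕜 := ℝ))
  have hεfst : Function.HasTemperateGrowth
      (fun q : EuclideanSpace ℝ (Fin d) × EuclideanSpace ℝ (Fin d) => ε q.1) :=
    my_htg_comp_clm hεt (ContinuousLinearMap.fst ℝ (EuclideanSpace ℝ (Fin d)) (EuclideanSpace ℝ (Fin d)))
  have hdfst : Function.HasTemperateGrowth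
      (fun q : EuclideanSpace ℝ (Fin d) × EuclideanSpace ℝ (Fin d) => fderiv ℝ ε q.1) :=
    my_htg_comp_clm hdet (ContinuousLinearMap.fst ℝ (EuclideanSpace ℝ (Fin d)) (EuclideanSpace ℝ (Fin d)))
  have hsnd : Function.HasTemperateGrowth
      (fun q : EuclideanSpace ℝ (Fin d) × EuclideanSpace ℝ (Fin d) => q.2) :=
    (ContinuousLinearMap.snd ℝ (EuclideanSpace ℝ (Fin d)) (EuclideanSpace ℝ (Fin d))).hasTemperateGrowth
  have hfd2 : Function.HasTemperateGrowth
      (fun q : EuclideanSpace ℝ (Fin d) × EuclideanSpace ℝ (Fin d) => fderiv ℝ ε q.1 q.2) :=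
    my_htg_clm_apply hdfst hsnd
  have hX : Function.HasTemperateGrowth
      (fun q : EuclideanSpace ℝ (Fin d) × EuclideanSpace ℝ (Fin d) =>
        ((ε q.1, -(fderiv ℝ ε q.1 q.2)) :
          EuclideanSpace ℝ (Fin d) × EuclideanSpace ℝ (Fin d))) :=
    my_htg_prod hεfst (my_htg_clm_comp hfd2 (-(ContinuousLinearMap.id ℝ (EuclideanSpace ℝ (Fin d)))))
  refine ⟨bilinLeftCLM (ContinuousLinearMap.flip (ContinuousLinearMap.apply ℝ ℝ)) hX
      (fderivCLM ℝ _ ℝ φ),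
    bilinLeftCLM (ContinuousLinearMap.flip (ContinuousLinearMap.apply ℝ ℝ)) hX
      (fderivCLM ℝ _ ℝ ψ), rfl, rfl, ?_⟩
  exact my_skew ε hε' hεc φ ψ
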